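/- arXiv:1701.02135 — 3 statements merged into one kernel-verified Lean document; each statement's English description precedes it below -/
import Mathlib

section
/- Let k = 𝔽_q with q odd, let V be a finite-dimensional k-vector space, Q : V → k a quadratic form, and l : V → k a linear functional. Define Q^⊥ = {v ∈ V | Q(v + v') = Q(v') for all v' ∈ V}. If the restriction of l to Q^⊥ is nonzero, then ∑_{v ∈ V} ψ(Q(v) + l(v)) = 0 for any nontrivial additive character ψ : k → ℂ*. -/
/-!
Translating by a vector `u` of the radical leaves `Q` unchanged and shifts `l` by `l u`. Since
`l` is nonzero on the radical, `u` can be scaled so that this shift is any prescribed `t` with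
`ψ t ≠ 1`; the sum is then invariant under multiplication by `ψ t`, hence vanishes.
-/

namespace QuadraticMap

variable {R M P : Type*} [CommRing R] [AddCommGroup M] [AddCommGroup P] [Module R M]
  [Module R P] {Q : QuadraticMap R M P}

lemma mem_radical_of_forall_map_add {m : M} (h : ∀ n, Q (m + n) = Q n) : m ∈ Q.radical :=
  mem_radical_iff'.mpr ⟨by simpa using h 0, h⟩

lemma map_add_of_mem_radical {m : M} (hm : m ∈ Q.radical) (n : M) : Q (n + m) = Q n := by
  rw [add_comm, (mem_radical_iff'.mp hm).2]

end QuadraticMap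

lemma AddChar.sum_comp_eq_zero_of_map_add_eq_add {G A M : Type*} [AddGroup G] [Fintype G]
    [AddMonoid A] [CommRing M] [IsDomain M] (ψ : AddChar A M) {f : G → A} {a : G} {t : A}
    (hψt : ψ t ≠ 1) (hf : ∀ x, f (x + a) = f x + t) :
    ∑ x, ψ (f x) = 0 := by
  have hinv : ∑ x, ψ (f x) = (∑ x, ψ (f x)) * ψ t :=
    calc ∑ x, ψ (f x) = ∑ x, ψ (f (x + a)) := (Equiv.sum_comp (Equiv.addRight a) _).symm
      _ = (∑ x, ψ (f x)) * ψ t := by simp only [hf, AddChar.map_add_eq_mul, Finset.sum_mul]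
  exact (mul_right_eq_self₀.mp hinv.symm).resolve_left hψt

theorem sum_psi_quad_add_lin_eq_zero_general (k : Type*) [Field k]
    (V : Type*) [AddCommGroup V] [Module k V] [Fintype V]
    (Q : QuadraticForm k V) (l : V →ₗ[k] k)
    (ψ : AddChar k ℂ) (hψ : ψ ≠ 1)
    (hl : ∃ v, (∀ v' : V, Q (v + v') = Q v') ∧ l v ≠ 0) :
    ∑ v : V, ψ (Q v + l v) = 0 := by
  obtain ⟨u, hu, hlu⟩ := hl
  obtain ⟨t, hψt⟩ := AddChar.ne_one_iff.mp hψ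
  have hmem : (t / l u) • u ∈ Q.radical :=
    Q.radical.smul_mem _ (QuadraticMap.mem_radical_of_forall_map_add hu)
  refine ψ.sum_comp_eq_zero_of_map_add_eq_add (a := (t / l u) • u) hψt fun v => ?_
  rw [QuadraticMap.map_add_of_mem_radical hmem, map_add, map_smul, smul_eq_mul,
    div_mul_cancel₀ t hlu, add_assoc]

/-- if the restriction of the linear functional `l` to the radical
`Q^⊥ = {v | ∀ v', Q(v+v') = Q(v')}` of the quadratic form `Q` is nonzero, then
`∑_{v ∈ V} ψ(Q(v) + l(v)) = 0`. -/
theorem sum_psi_quad_add_lin_eq_zero (k : Type*) [Field k] [Fintype k]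
    (hodd : Odd (Fintype.card k))
    (V : Type*) [AddCommGroup V] [Module k V] [FiniteDimensional k V] [Fintype V]
    (Q : QuadraticForm k V) (l : V →ₗ[k] k)
    (ψ : AddChar k ℂ) (hψ : ψ ≠ 1)
    (hl : ∃ v, (∀ v' : V, Q (v + v') = Q v') ∧ l v ≠ 0) :
    ∑ v : V, ψ (Q v + l v) = 0 :=
  sum_psi_quad_add_lin_eq_zero_general k V Q l ψ hψ hl
end

section
/- Let k = 𝔽_q with q odd, ψ a nontrivial additive character, t ≥ 0, α ∈ k*, and let P : k^{2t+1} → k be P(x) = ∑_{i=1}^t x_i x_{i+t} + α x_{2t+1}². Then |∑_{v ∈ k^{2t+1}} ψ(P(v))| = q^{t + 1/2}. -/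
/-!
The sum factors as a hyperbolic part times a one-variable quadratic Gauss sum.
In the hyperbolic part, summing over `y` first gives `q^t` or `0` according as `x = 0` or not,
so it equals `q^t`. For the Gauss sum `G`, substituting `z = w + u` in
`|G|² = ∑_{z,w} ψ(α z² - α w²)` leaves `∑_u ψ(α u²) ∑_w ψ(2 α u w)`, and since `2α ≠ 0` the
inner sum vanishes unless `u = 0`, so `|G|² = q`.
-/

open Finset

namespace AddChar

lemma map_sum_eq_prod {A M ι : Type*} [AddCommMonoid A] [CommMonoid M] (ψ : AddChar A M)
    (s : Finset ι) (f : ι → A) : ψ (∑ i ∈ s, f i) = ∏ i ∈ s, ψ (f i) := by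
  induction s using Finset.cons_induction with
  | empty => simp
  | cons i s _ ih => rw [sum_cons, prod_cons, map_add_eq_mul, ih]

section Orthogonality

variable {R R' ι : Type*} [CommRing R] [Fintype R] [DecidableEq R] [CommRing R'] [IsDomain R']
  [Fintype ι] [DecidableEq ι] {ψ : AddChar R R'}

lemma sum_dotProduct_eq_ite (hψ : ψ.IsPrimitive) (x : ι → R) :
    ∑ y : ι → R, ψ (x ⬝ᵥ y) = if x = 0 then (Fintype.card R : R') ^ Fintype.card ι else 0 := by
  calc ∑ y : ι → R, ψ (x ⬝ᵥ y)
      = ∑ y : ι → R, ∏ i, ψ (y i * x i) := by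
        simp only [dotProduct, map_sum_eq_prod, mul_comm (x _)]
    _ = ∏ i, ∑ a : R, ψ (a * x i) := (Fintype.prod_sum fun i a ↦ ψ (a * x i)).symm
    _ = ∏ i, if x i = 0 then (Fintype.card R : R') else 0 := by
        simp only [sum_mulShift _ hψ, Nat.cast_ite, Nat.cast_zero]
    _ = _ := by
        split_ifs with hx
        · simp [hx]
        · obtain ⟨i, hi⟩ := Function.ne_iff.mp hx
          exact prod_eq_zero (mem_univ i) (if_neg hi)

lemma sum_sum_dotProduct (hψ : ψ.IsPrimitive) :
    ∑ x : ι → R, ∑ y : ι → R, ψ (x ⬝ᵥ y) = (Fintype.card R : R') ^ Fintype.card ι := by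
  simp [sum_dotProduct_eq_ite hψ]

end Orthogonality

lemma mul_conj_sum_eq_sum_sum_sub {R : Type*} [CommRing R] [Fintype R] (ψ : AddChar R ℂ)
    (f : R → R) :
    (∑ z, ψ (f z)) * starRingEnd ℂ (∑ z, ψ (f z)) = ∑ u, ∑ w, ψ (f (w + u) - f w) := by
  have hR : 0 < ringChar R := Nat.pos_of_ne_zero (CharP.ringChar_ne_zero_of_finite R)
  simp only [map_sum, starComp_apply hR, inv_apply, sum_mul_sum, ← map_add_eq_mul,
    ← sub_eq_add_neg]
  rw [sum_comm, eq_comm, sum_comm]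
  refine sum_congr rfl fun w _ ↦ ?_
  exact Equiv.sum_comp (Equiv.addLeft w) fun z ↦ ψ (f z - f w)

variable {k : Type*} [Field k] [Fintype k] {ψ : AddChar k ℂ}

lemma norm_sum_apply_mul_sq (hψ : ψ.IsPrimitive) (hk : ringChar k ≠ 2) {α : k} (hα : α ≠ 0) :
    ‖∑ z, ψ (α * z ^ 2)‖ = √(Fintype.card k) := by
  classical
  have hdiff (u w : k) : α * (w + u) ^ 2 - α * w ^ 2 = α * u ^ 2 + w * (2 * α * u) := by ring
  have hcoef (u : k) : 2 * α * u = 0 ↔ u = 0 := by simp [Ring.two_ne_zero hk, hα]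
  have hsq : (‖∑ z, ψ (α * z ^ 2)‖ : ℂ) ^ 2 = Fintype.card k := by
    rw [← Complex.mul_conj', mul_conj_sum_eq_sum_sum_sub]
    simp [hdiff, map_add_eq_mul, ← mul_sum, sum_mulShift _ hψ, hcoef]
  rw [eq_comm, Real.sqrt_eq_iff_eq_sq (by positivity) (norm_nonneg _)]
  exact_mod_cast hsq.symm

end AddChar

open AddChar in
/-- for `P(x,y,z) = ∑ᵢ xᵢyᵢ + αz²` on `k^{2t+1}`,
`|∑_v ψ(P(v))| = q^{t+1/2}`. -/
theorem abs_sum_psi_odd_rank_quadratic (k : Type*) [Field k] [Fintype k]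
    (hodd : Odd (Fintype.card k))
    (ψ : AddChar k ℂ) (hψ : ∃ a : k, ψ a ≠ 1) (t : ℕ) (α : k) (hα : α ≠ 0) :
    ‖∑ v : (Fin t → k) × (Fin t → k) × k,
        ψ ((∑ i : Fin t, v.1 i * v.2.1 i) + α * v.2.2 ^ 2)‖
      = (Fintype.card k : ℝ) ^ t * Real.sqrt (Fintype.card k) := by
  classical
  have hprim : ψ.IsPrimitive := IsPrimitive.of_ne_one (ne_one_iff.mpr hψ)
  have hk : ringChar k ≠ 2 := by
    rw [Ne, FiniteField.even_card_iff_char_two, ← Nat.even_iff, Nat.not_even_iff_odd]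
    exact hodd
  have hsplit : ∑ v : (Fin t → k) × (Fin t → k) × k,
        ψ ((∑ i : Fin t, v.1 i * v.2.1 i) + α * v.2.2 ^ 2) =
      (∑ x : Fin t → k, ∑ y : Fin t → k, ψ (x ⬝ᵥ y)) * ∑ z : k, ψ (α * z ^ 2) := by
    simp only [Fintype.sum_prod_type, map_add_eq_mul, ← mul_sum, ← sum_mul]
    rfl
  rw [hsplit, norm_mul, sum_sum_dotProduct hprim, norm_sum_apply_mul_sq hprim hk hα, norm_pow,
    Complex.norm_natCast, Fintype.card_fin]
end

section
/- Let k = 𝔽_q with q odd, V a finite-dimensional k-vector space, Q : V → k a quadratic form whose radical Q^⊥ has codimension r in V, and ψ a nontrivial additive character on k. Then |∑_{v ∈ V} ψ(Q(v))| ≥ q^{dim V - r}. -/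
/-!
Write `S = ∑ v, ψ (Q v)`. Expanding `conj S * S` and shifting the summation variable by `h`,
the identity `Q (h + w) = Q h + Q w + polar Q h w` turns it into
`∑ h, (∑ w, ψ (polar Q h w)) ψ (Q h)`.
The inner sum is a character sum over the linear form `polar Q h`, so it vanishes unless `h` lies
in the kernel of the polar form, which in odd characteristic is the radical, where `Q h = 0`.
Hence `‖S‖² = |V| · |Q^⊥| ≥ |Q^⊥|²`.
-/

lemma FiniteField.two_ne_zero_of_odd_card {F : Type*} [Field F] [Fintype F]
    (h : Odd (Fintype.card F)) : (2 : F) ≠ 0 :=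
  Ring.two_ne_zero fun hF =>
    Nat.not_even_iff_odd.2 h (Nat.even_iff.2 (FiniteField.even_card_iff_char_two.1 hF))

namespace AddChar

variable {k V R : Type*} [Field k] [AddCommGroup V] [Module k V] [Fintype V]
  [CommRing R] [IsDomain R]

lemma sum_apply_linearMap_eq_ite {ψ : AddChar k R} (hψ : ψ ≠ 1) (f : V →ₗ[k] k)
    [Decidable (f = 0)] :
    ∑ v, ψ (f v) = if f = 0 then (Fintype.card V : R) else 0 := by
  have hcomp : ψ.compAddMonoidHom f.toAddMonoidHom = 0 ↔ f = 0 := by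
    refine ⟨fun h => ?_, fun h => by ext v; simp [h]⟩
    by_contra hf
    obtain ⟨a, ha⟩ := ne_one_iff.1 hψ
    obtain ⟨v, rfl⟩ := (f.surjective_or_eq_zero.resolve_right hf) a
    exact ha (DFunLike.congr_fun h v)
  classical
  exact (sum_eq_ite (ψ.compAddMonoidHom f.toAddMonoidHom)).trans (if_congr hcomp rfl rfl)

end AddChar

namespace QuadraticMap

section CommRing

variable {k V R : Type*} [CommRing k] [AddCommGroup V] [Module k V] [Fintype V] [CommRing R]

lemma sum_neg_mul_sum (Q : QuadraticMap k V k) (ψ : AddChar k R) :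
    (∑ w, ψ (-Q w)) * ∑ v, ψ (Q v) = ∑ h, (∑ w, ψ (polar Q h w)) * ψ (Q h) := by
  have hshift (w : V) : ∑ v, ψ (-Q w) * ψ (Q v) = ∑ h, ψ (polar Q h w) * ψ (Q h) := by
    refine (Fintype.sum_equiv (Equiv.addRight w) _ _ fun h => ?_).symm
    rw [Equiv.coe_addRight, ← AddChar.map_add_eq_mul, ← AddChar.map_add_eq_mul, polar]
    ring_nf
  simp_rw [Finset.sum_mul_sum, hshift, Finset.sum_mul]
  exact Finset.sum_comm

end CommRing

variable {k V R : Type*} [Field k] [Invertible (2 : k)] [AddCommGroup V] [Module k V] [Fintype V]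

lemma sum_neg_mul_sum_eq_card_mul_card_radical [CommRing R] [IsDomain R] (Q : QuadraticMap k V k)
    {ψ : AddChar k R} (hψ : ψ ≠ 1) :
    (∑ w, ψ (-Q w)) * ∑ v, ψ (Q v) = Fintype.card V * Nat.card Q.radical := by
  classical
  rw [sum_neg_mul_sum]
  calc _ = ∑ h, if h ∈ Q.radical then (Fintype.card V : R) else 0 := by
        refine Fintype.sum_congr _ _ fun h => ?_
        simp_rw [← polarBilin_apply_apply, AddChar.sum_apply_linearMap_eq_ite hψ,
          ← LinearMap.mem_ker, ← radical_eq_ker_polarBilin]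
        split_ifs with hh
        · rw [(mem_radical_iff'.1 hh).1, AddChar.map_zero_eq_one, mul_one]
        · rw [zero_mul]
    _ = Fintype.card V * Nat.card Q.radical := by
        simp [Finset.sum_ite, Nat.card_eq_fintype_card, Fintype.card_subtype, mul_comm]

lemma sq_norm_sum_eq_card_mul_card_radical [Finite k] (Q : QuadraticMap k V k)
    {ψ : AddChar k ℂ} (hψ : ψ ≠ 1) :
    ‖∑ v, ψ (Q v)‖ ^ 2 = Fintype.card V * Nat.card Q.radical := by
  have hconj : (starRingEnd ℂ) (∑ v, ψ (Q v)) = ∑ w, ψ (-Q w) := by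
    rw [map_sum]
    exact Fintype.sum_congr _ _ fun w => (AddChar.map_neg_eq_conj ψ _).symm
  exact_mod_cast (Complex.conj_mul' _).symm.trans
    (hconj ▸ sum_neg_mul_sum_eq_card_mul_card_radical Q hψ)

lemma card_radical_le_norm_sum [Finite k] (Q : QuadraticMap k V k)
    {ψ : AddChar k ℂ} (hψ : ψ ≠ 1) :
    (Nat.card Q.radical : ℝ) ≤ ‖∑ v, ψ (Q v)‖ := by
  have hcard : Nat.card Q.radical ≤ Fintype.card V := by
    rw [← Nat.card_eq_fintype_card]; exact Finite.card_subtype_le _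
  rw [← pow_le_pow_iff_left₀ (Nat.cast_nonneg _) (norm_nonneg _) two_ne_zero,
    sq_norm_sum_eq_card_mul_card_radical Q hψ, pow_two]
  gcongr

end QuadraticMap

theorem abs_sum_psi_quad_ge_general (k : Type*) [Field k] [Fintype k]
    (hodd : Odd (Fintype.card k))
    (V : Type*) [AddCommGroup V] [Module k V] [Fintype V]
    (Q : QuadraticForm k V) (ψ : AddChar k ℂ) (hψ : ∃ a : k, ψ a ≠ 1)
    (W : Submodule k V) (hW : ∀ v : V, v ∈ W ↔ ∀ v' : V, Q (v + v') = Q v')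
    (r : ℕ) (hr : Module.finrank k V - Module.finrank k W = r) :
    ‖(∑ v : V, ψ (Q v))‖
      ≥ (Fintype.card k : ℝ) ^ (Module.finrank k V - r) := by
  let _ : Invertible (2 : k) := invertibleOfNonzero (FiniteField.two_ne_zero_of_odd_card hodd)
  have hW_eq : W = Q.radical := by
    ext v
    rw [hW, QuadraticMap.mem_radical_iff']
    exact ⟨fun h => ⟨by simpa using h 0, h⟩, And.right⟩
  have hdim : Module.finrank k V - r = Module.finrank k W := by
    have := Submodule.finrank_le W
    omega
  rw [ge_iff_le, hdim, ← Nat.card_eq_fintype_card, ← Nat.cast_pow,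
    ← Module.natCard_eq_pow_finrank, hW_eq]
  exact Q.card_radical_le_norm_sum (AddChar.ne_one_iff.2 hψ)

/-- if the radical `W = Q^⊥` of the quadratic form `Q` has
codimension `r` in `V`, then `|∑_{v∈V} ψ(Q(v))| ≥ q^{dim V - r}`. -/
theorem abs_sum_psi_quad_ge (k : Type*) [Field k] [Fintype k]
    (hodd : Odd (Fintype.card k))
    (V : Type*) [AddCommGroup V] [Module k V] [FiniteDimensional k V] [Fintype V]
    (Q : QuadraticForm k V) (ψ : AddChar k ℂ) (hψ : ∃ a : k, ψ a ≠ 1)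
    (W : Submodule k V) (hW : ∀ v : V, v ∈ W ↔ ∀ v' : V, Q (v + v') = Q v')
    (r : ℕ) (hr : Module.finrank k V - Module.finrank k W = r) :
    ‖(∑ v : V, ψ (Q v))‖
      ≥ (Fintype.card k : ℝ) ^ (Module.finrank k V - r) :=
  abs_sum_psi_quad_ge_general k hodd V Q ψ hψ W hW r hr
end
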